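/- arXiv:2207.00886 — 2 statements merged into one kernel-verified Lean document; each statement's English description precedes it below -/
import Mathlib

section
/- Let C be a binary self-dual code of length n that contains the all-ones vector and has all codeword weights even. Let W be its exact weight enumerator and ρ = √2 − 1, μ = −√2 − 1, with Φ the field automorphism of ℚ(√2) sending √2 to −√2. Then for every 0 ≤ t ≤ n−1 and every v ∈ F₂^{n−t−1}: W_{<t>}[(1)v̄] = (−1)^{wt(v)} · ρᵗ · Φ(W_{<t>}[(0)v]), where v̄ is the complementary vector of v. -/
/-!
Complementing the first `t` coordinates, `u ↦ ū`, turns the word `(ū)(1)v̄` into `(u)(0)v + 𝟙`,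
and `C` is closed under adding the all-ones word `𝟙`. So both sides are sums over the same
codewords `(u)(0)v`, with `ρ^{wt ū} = ρ^{t - wt u}` on the left. Since `ρ μ = -1`, this equals
`(-1)^{wt u} ρ^t μ^{wt u}`, and `(-1)^{wt u} = (-1)^{wt v}` because codewords have even weight.
-/

open Finset

noncomputable def rho : ℝ := Real.sqrt 2 - 1
noncomputable def mu : ℝ := -Real.sqrt 2 - 1

def wt {n : ℕ} (v : Fin n → ZMod 2) : ℕ := (univ.filter fun i => v i = 1).card

/-- The t-th derivative with parameter x (x = ρ gives W_{<t>}; x = μ gives the image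
Φ(W_{<t>}) of W_{<t>} under the automorphism Φ of ℚ(√2) with Φ(√2) = −√2, since the
entries of W_{<t>} are ℤ-linear combinations of powers of ρ and Φ(ρ) = μ). -/
noncomputable def wDerivP (x : ℝ) (t m : ℕ) (W : (Fin (t + m) → ZMod 2) → ℝ) :
    (Fin m → ZMod 2) → ℝ :=
  fun v => ∑ u : Fin t → ZMod 2, x ^ wt u * W (Fin.append u v)

def IsSelfDual {n : ℕ} (C : Submodule (ZMod 2) (Fin n → ZMod 2)) : Prop :=
  ∀ u, u ∈ C ↔ ∀ c ∈ C, ∑ i, u i * c i = 0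

lemma wt_add_wt_add_one {n : ℕ} (u : Fin n → ZMod 2) : wt u + wt (u + 1) = n := by
  have hcompl : (univ.filter fun i => (u + 1) i = 1) = univ.filter fun i => ¬u i = 1 :=
    filter_congr fun i _ => by
      show u i + 1 = 1 ↔ ¬u i = 1
      generalize u i = a
      revert a
      decide
  rw [wt, wt, hcompl, card_filter_add_card_filter_not, card_univ, Fintype.card_fin]

lemma wt_le {n : ℕ} (u : Fin n → ZMod 2) : wt u ≤ n :=
  (wt_add_wt_add_one u).le.trans' (Nat.le_add_right _ _)

lemma wt_add_one {n : ℕ} (u : Fin n → ZMod 2) : wt (u + 1) = n - wt u := by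
  have := wt_add_wt_add_one u
  omega

lemma wt_append {a b : ℕ} (u : Fin a → ZMod 2) (w : Fin b → ZMod 2) :
    wt (Fin.append u w) = wt u + wt w := by
  simp only [wt, card_filter, Fin.sum_univ_add, Fin.append_left, Fin.append_right]

lemma wt_zero {n : ℕ} : wt (0 : Fin n → ZMod 2) = 0 := by
  simp [wt]

lemma Fin.append_add_append {α : Type*} [Add α] {p q : ℕ} (a c : Fin p → α)
    (b d : Fin q → α) : Fin.append a b + Fin.append c d = Fin.append (a + c) (b + d) := by
  funext i
  refine Fin.addCases (fun j => ?_) (fun j => ?_) i <;>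
    simp [Fin.append_left, Fin.append_right]

lemma Fin.append_one_one {α : Type*} [One α] {p q : ℕ} :
    Fin.append (1 : Fin p → α) (1 : Fin q → α) = 1 := by
  funext i
  refine Fin.addCases (fun j => ?_) (fun j => ?_) i <;>
    simp [Fin.append_left, Fin.append_right]

lemma Set.indicator_add_mem_submodule {R M β : Type*} [Ring R] [AddCommGroup M]
    [Module R M] [Zero β] [One β] (C : Submodule R M) {a : M} (ha : a ∈ C) (w : M) :
    (C : Set M).indicator (1 : M → β) (w + a) = (C : Set M).indicator 1 w := by
  by_cases hw : w ∈ C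
  · simp [hw, C.add_mem hw ha]
  · simp [hw, (C.add_mem_iff_left ha).not.mpr hw]

lemma rho_mul_mu : rho * mu = -1 := by
  have h2 : Real.sqrt 2 ^ 2 = 2 := Real.sq_sqrt zero_le_two
  rw [rho, mu]
  linear_combination -h2

lemma pow_sub_eq_of_mul_eq_neg_one {R : Type*} [CommRing R] {x y : R} (hxy : x * y = -1)
    {k n : ℕ} (hk : k ≤ n) : x ^ (n - k) = (-1) ^ k * x ^ n * y ^ k := by
  obtain ⟨j, rfl⟩ := Nat.exists_eq_add_of_le hk
  have hsplit : (-1) ^ k * x ^ (k + j) * y ^ k = x ^ j * (-(x * y)) ^ k := by ring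
  rw [Nat.add_sub_cancel_left, hsplit, hxy, neg_neg, one_pow, mul_one]

lemma rho_pow_wt_add_one {n k : ℕ} (u : Fin n → ZMod 2) (h : Even (wt u + k)) :
    rho ^ wt (u + 1) = (-1) ^ k * rho ^ n * mu ^ wt u := by
  rw [wt_add_one, pow_sub_eq_of_mul_eq_neg_one rho_mul_mu (wt_le u),
    neg_one_pow_congr (Nat.even_add.1 h)]

theorem stmt_11_general (t m : ℕ) (C : Submodule (ZMod 2) (Fin (t + (1 + m)) → ZMod 2))
    (hones : (fun _ => (1 : ZMod 2)) ∈ C)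
    (heven : ∀ c ∈ C, Even (wt c))
    (W : (Fin (t + (1 + m)) → ZMod 2) → ℝ)
    (hW : W = Set.indicator (C : Set (Fin (t + (1 + m)) → ZMod 2)) 1)
    (v : Fin m → ZMod 2) :
    wDerivP rho t (1 + m) W
        (Fin.append (fun _ : Fin 1 => (1 : ZMod 2)) (fun i => v i + 1)) =
      (-1 : ℝ) ^ wt v * rho ^ t *
        wDerivP mu t (1 + m) W (Fin.append (fun _ : Fin 1 => (0 : ZMod 2)) v) := by
  subst hW
  simp only [wDerivP, mul_sum]
  refine (Fintype.sum_equiv (Equiv.addRight 1) _ _ fun u => ?_).symm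
  have hcompl : Fin.append (u + 1) (Fin.append (fun _ : Fin 1 => (1 : ZMod 2))
      (fun i => v i + 1)) = Fin.append u (Fin.append (fun _ : Fin 1 => (0 : ZMod 2)) v) + 1 := by
    rw [← Fin.append_one_one, ← Fin.append_one_one (p := 1), Fin.append_add_append,
      Fin.append_add_append]
    rfl
  set w := Fin.append u (Fin.append (fun _ : Fin 1 => (0 : ZMod 2)) v)
  simp only [Equiv.coe_addRight]
  rw [hcompl, Set.indicator_add_mem_submodule C (a := 1) hones]
  by_cases hw : w ∈ C
  · have hparity : Even (wt u + wt v) := by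
      have := heven w hw
      rwa [wt_append, wt_append, show wt (fun _ : Fin 1 => (0 : ZMod 2)) = 0 from wt_zero,
        zero_add] at this
    rw [Set.indicator_of_mem hw, Pi.one_apply, mul_one, mul_one, rho_pow_wt_add_one u hparity]
  · rw [Set.indicator_of_notMem hw, mul_zero, mul_zero, mul_zero]

/-- For a binary self-dual code C of length n = t+(1+m) containing the all-ones
vector and with all codeword weights even, with exact weight enumerator W:
W_{<t>}[(1)v̄] = (−1)^{wt(v)} ρᵗ Φ(W_{<t>}[(0)v]) for every v ∈ F₂^{n−t−1},
where v̄ is the coordinatewise complement of v. -/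
theorem stmt_11 (t m : ℕ) (C : Submodule (ZMod 2) (Fin (t + (1 + m)) → ZMod 2))
    (hC : IsSelfDual C)
    (hones : (fun _ => (1 : ZMod 2)) ∈ C)
    (heven : ∀ c ∈ C, Even (wt c))
    (W : (Fin (t + (1 + m)) → ZMod 2) → ℝ)
    (hW : W = Set.indicator (C : Set (Fin (t + (1 + m)) → ZMod 2)) 1)
    (v : Fin m → ZMod 2) :
    wDerivP rho t (1 + m) W
        (Fin.append (fun _ : Fin 1 => (1 : ZMod 2)) (fun i => v i + 1)) =
      (-1 : ℝ) ^ wt v * rho ^ t *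
        wDerivP mu t (1 + m) W (Fin.append (fun _ : Fin 1 => (0 : ZMod 2)) v) :=
  stmt_11_general t m C hones heven W hW v
end

section
/- Balance principle: Let C be a binary self-dual code of length n, fix a coordinate position t, and for δ ∈ {0,1} let A_{k,δ} be the number of codewords v of weight k with v[t] = δ. With ρ = √2 − 1, then Σ_{k=0}^{n} A_{k,1} ρ^{k−1} = Σ_{k=0}^{n} A_{k,0} ρ^{k+1}. -/
/-!
Put `f v = ρ ^ wt v * (ρ⁻¹ if v t = 1, -ρ if v t = 0)`; the claim says that `f` sums to zero
over `C`. Coordinatewise `f` is a product of the vectors `(1, ρ)` (at `i ≠ t`) and `(-ρ, 1)`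
(at `t`), which are eigenvectors of the Hadamard matrix `[[1, 1], [1, -1]]` for the eigenvalues
`√2` and `-√2`, because `1 + ρ = √2` and `1 - ρ = √2 ρ`. So the Walsh–Hadamard transform of `f`
is `-√2 ^ n • f`, and Poisson summation over the self-dual code,
`∑ u ∈ C, f̂ u = |C| ∑ v ∈ C, f v`, forces `(|C| + √2 ^ n) ∑ v ∈ C, f v = 0`.
-/

open Finset

def signChar : AddChar (ZMod 2) ℝ := AddChar.zmodChar 2 (ζ := (-1 : ℝ)) (by norm_num)

lemma signChar_one : signChar 1 = -1 := pow_one _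

lemma signChar_eq_one_iff (a : ZMod 2) : signChar a = 1 ↔ a = 0 := by
  obtain rfl | rfl : a = 0 ∨ a = 1 := by revert a; decide
  · simp
  · rw [signChar_one]; norm_num

lemma AddChar.map_sum_eq_prod {A M ι : Type*} [AddCommMonoid A] [CommMonoid M]
    (ψ : AddChar A M) (s : Finset ι) (f : ι → A) : ψ (∑ i ∈ s, f i) = ∏ i ∈ s, ψ (f i) := by
  classical
  induction s using Finset.induction_on with
  | empty => simp
  | insert a s ha ih => rw [sum_insert ha, prod_insert ha, ψ.map_add_eq_mul, ih]

lemma sum_zmod_two (f : ZMod 2 → ℝ) : ∑ b, f b = f 0 + f 1 := Fin.sum_univ_two f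

section WalshHadamard

variable {ι : Type*} [Fintype ι]

lemma sum_signChar_dotProduct (C : Submodule (ZMod 2) (ι → ZMod 2)) [Fintype C]
    (v : ι → ZMod 2) [Decidable (∀ c ∈ C, v ⬝ᵥ c = 0)] :
    ∑ u : C, signChar (v ⬝ᵥ u) = if ∀ c ∈ C, v ⬝ᵥ c = 0 then (Fintype.card C : ℝ) else 0 := by
  let pairing : C →+ ZMod 2 :=
    { toFun := fun u => v ⬝ᵥ u
      map_zero' := dotProduct_zero v
      map_add' := fun a b => dotProduct_add v a b }
  have hψ : signChar.compAddMonoidHom pairing = 0 ↔ ∀ c ∈ C, v ⬝ᵥ c = 0 := by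
    simp [AddChar.eq_zero_iff, pairing, signChar_eq_one_iff]
  rw [← if_congr hψ rfl rfl]
  exact AddChar.sum_eq_ite (signChar.compAddMonoidHom pairing)

variable [DecidableEq ι]

def walshHadamard (f : (ι → ZMod 2) → ℝ) (u : ι → ZMod 2) : ℝ :=
  ∑ v, signChar (v ⬝ᵥ u) * f v

lemma walshHadamard_prod (φ : ι → ZMod 2 → ℝ) (u : ι → ZMod 2) :
    walshHadamard (fun v => ∏ i, φ i (v i)) u = ∏ i, ∑ b, signChar (b * u i) * φ i b := by
  simp only [walshHadamard, dotProduct, AddChar.map_sum_eq_prod, ← prod_mul_distrib]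
  exact (Fintype.prod_sum fun i b => signChar (b * u i) * φ i b).symm

end WalshHadamard

theorem sum_walshHadamard_of_isSelfDual {n : ℕ} {C : Submodule (ZMod 2) (Fin n → ZMod 2)}
    [Fintype C] (hC : IsSelfDual C) (f : (Fin n → ZMod 2) → ℝ) :
    ∑ u : C, walshHadamard f u = Fintype.card C * ∑ v : C, f v := by
  classical
  calc ∑ u : C, walshHadamard f u = ∑ v, (∑ u : C, signChar (v ⬝ᵥ u)) * f v := by
        simp only [walshHadamard, sum_mul]; exact sum_comm
    _ = ∑ v, if v ∈ C then Fintype.card C * f v else 0 := by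
        refine sum_congr rfl fun v _ => ?_
        have hv : (∀ c ∈ C, v ⬝ᵥ c = 0) ↔ v ∈ C := (hC v).symm
        rw [sum_signChar_dotProduct, if_congr hv rfl rfl, ite_mul, zero_mul]
    _ = Fintype.card C * ∑ v : C, f v := by
        rw [← sum_filter, ← mul_sum, sum_subtype (p := (· ∈ C)) _ (fun v => by simp)]

lemma rho_pos : 0 < rho := by
  rw [rho, sub_pos, Real.lt_sqrt zero_le_one]; norm_num

lemma one_add_rho : 1 + rho = √2 := by rw [rho]; ring

lemma one_sub_rho : 1 - rho = √2 * rho := by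
  rw [rho, mul_sub, Real.mul_self_sqrt zero_le_two]; ring

noncomputable def weightFactor (b : ZMod 2) : ℝ := if b = 1 then rho else 1

noncomputable def markedFactor (b : ZMod 2) : ℝ := if b = 1 then rho⁻¹ else -rho

lemma sum_signChar_mul_weightFactor (a : ZMod 2) :
    ∑ b, signChar (b * a) * weightFactor b = √2 * weightFactor a := by
  obtain rfl | rfl : a = 0 ∨ a = 1 := by revert a; decide
  all_goals simp [sum_zmod_two, weightFactor, signChar_one]
  · linarith [one_add_rho]
  · linarith [one_sub_rho]

lemma sum_signChar_mul_weightFactor_mul_markedFactor (a : ZMod 2) :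
    ∑ b, signChar (b * a) * (weightFactor b * markedFactor b) =
      -√2 * (weightFactor a * markedFactor a) := by
  obtain rfl | rfl : a = 0 ∨ a = 1 := by revert a; decide
  all_goals simp [sum_zmod_two, weightFactor, markedFactor, signChar_one, rho_pos.ne']
  · linarith [one_sub_rho]
  · linarith [one_add_rho]

noncomputable def balanceWeight {n : ℕ} (t : Fin n) (v : Fin n → ZMod 2) : ℝ :=
  rho ^ wt v * markedFactor (v t)

lemma balanceWeight_eq_prod {n : ℕ} (t : Fin n) :
    balanceWeight t =
      fun v => ∏ i, weightFactor (v i) * (if i = t then markedFactor (v i) else 1) := by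
  funext v
  rw [prod_mul_distrib, Fintype.prod_ite_eq', balanceWeight, wt]
  simp only [weightFactor, prod_ite, prod_const, one_pow, mul_one]

lemma walshHadamard_balanceWeight {n : ℕ} (t : Fin n) (u : Fin n → ZMod 2) :
    walshHadamard (balanceWeight t) u = -(√2 ^ n) * balanceWeight t u := by
  have coordinate : ∀ i, ∑ b, signChar (b * u i) *
      (weightFactor b * (if i = t then markedFactor b else 1)) =
      (√2 * if i = t then -1 else 1) *
        (weightFactor (u i) * (if i = t then markedFactor (u i) else 1)) := by
    intro i
    split_ifs
    · rw [sum_signChar_mul_weightFactor_mul_markedFactor]; ring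
    · simp only [mul_one, sum_signChar_mul_weightFactor]
  rw [balanceWeight_eq_prod,
    walshHadamard_prod fun i b => weightFactor b * (if i = t then markedFactor b else 1),
    prod_congr rfl fun i _ => coordinate i, prod_mul_distrib, prod_mul_distrib, prod_const,
    card_univ, Fintype.card_fin, Fintype.prod_ite_eq']
  ring

lemma sum_balanceWeight_eq_zero {n : ℕ} {C : Submodule (ZMod 2) (Fin n → ZMod 2)} [Fintype C]
    (hC : IsSelfDual C) (t : Fin n) : ∑ v : C, balanceWeight t v = 0 := by
  have poisson := sum_walshHadamard_of_isSelfDual hC (balanceWeight t)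
  simp only [walshHadamard_balanceWeight, ← mul_sum] at poisson
  have hpos : (0 : ℝ) < Fintype.card C + √2 ^ n := by positivity
  have : (Fintype.card C + √2 ^ n) * ∑ v : C, balanceWeight t v = 0 := by linarith
  exact (mul_eq_zero.1 this).resolve_left hpos.ne'

lemma sum_balanceWeight {n : ℕ} (t : Fin n) (s : Finset (Fin n → ZMod 2)) :
    ∑ v ∈ s, balanceWeight t v =
      ∑ v ∈ s with v t = 1, rho ^ ((wt v : ℤ) - 1) -
        ∑ v ∈ s with v t = 0, rho ^ ((wt v : ℤ) + 1) := by
  have hne : ∀ x : ZMod 2, ¬x = 1 ↔ x = 0 := by decide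
  rw [← sum_filter_add_sum_filter_not s (fun v => v t = 1), sub_eq_add_neg, ← sum_neg_distrib]
  simp only [hne]
  congr 1 <;> refine sum_congr rfl fun v hv => ?_ <;>
    simp [(mem_filter.1 hv).2, balanceWeight, markedFactor, zpow_sub_one₀ rho_pos.ne',
      zpow_add_one₀ rho_pos.ne']

lemma sum_range_ncard_mul {α R : Type*} [Fintype α] [CommSemiring R] (p q : α → Prop)
    [DecidablePred p] [DecidablePred q] (w : α → ℕ) {N : ℕ} (hw : ∀ x, w x ≤ N) (F : ℕ → R) :
    ∑ k ∈ range (N + 1), ({x | p x ∧ w x = k ∧ q x}.ncard : R) * F k =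
      ∑ x with p x ∧ q x, F (w x) := by
  have hcard : ∀ k, {x | p x ∧ w x = k ∧ q x}.ncard = #{x | (p x ∧ q x) ∧ w x = k} := by
    intro k
    rw [← Set.ncard_coe_finset]
    congr 1
    ext x
    simp only [Set.mem_ofPred_eq, coe_filter, mem_univ, true_and]
    tauto
  simp_rw [hcard, ← nsmul_eq_mul, ← sum_const, ← filter_filter]
  exact sum_fiberwise_of_maps_to' (fun x _ => mem_range_succ_iff.2 (hw x)) F

/-- Balance principle: for a binary self-dual code C of length n, a fixed coordinate
position t, and A_{k,δ} the number of weight-k codewords v with v[t] = δ,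
Σ_{k=0}^{n} A_{k,1} ρ^{k−1} = Σ_{k=0}^{n} A_{k,0} ρ^{k+1}   (ρ = √2 − 1). -/
theorem stmt_16 (n : ℕ) (C : Submodule (ZMod 2) (Fin n → ZMod 2))
    (hC : IsSelfDual C) (t : Fin n) :
    ∑ k ∈ Finset.range (n + 1),
        ({v : Fin n → ZMod 2 | v ∈ C ∧ wt v = k ∧ v t = 1}.ncard : ℝ) * rho ^ ((k : ℤ) - 1) =
      ∑ k ∈ Finset.range (n + 1),
        ({v : Fin n → ZMod 2 | v ∈ C ∧ wt v = k ∧ v t = 0}.ncard : ℝ) * rho ^ ((k : ℤ) + 1) := by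
  classical
  have hwt : ∀ v : Fin n → ZMod 2, wt v ≤ n := fun v => (card_filter_le _ _).trans (by simp)
  rw [sum_range_ncard_mul (· ∈ C) (· t = 1) wt hwt, sum_range_ncard_mul (· ∈ C) (· t = 0) wt hwt,
    ← sub_eq_zero, ← filter_filter, ← filter_filter, ← sum_balanceWeight,
    ← sum_balanceWeight_eq_zero hC t]
  exact sum_subtype (p := (· ∈ C)) _ (fun v => by simp) _
end
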